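/- Deviation of the SVRG estimated gradient from the full gradient at an arbitrary reference point (appendix lemma, corrected constants): Suppose Assumption 2 holds. Then for all x, x̃, y ∈ ℝ^N and every integer A ≥ 1, E_{σ,i}[ ‖(∂Ĝ(σ,x,x̃))^T ∇F_i(Ĝ(σ,x,x̃)) − (∂G(y))^T ∇F_i(G(y))‖² ] ≤ 4(B_F² L_G² + B_G⁴ L_F²)·((1/A)‖x − x̃‖² + ‖x − y‖²). -/

import Mathlib

noncomputable section

open Finset
open scoped RealInnerProductSpace

abbrev Euc (N : ℕ) := EuclideanSpace ℝ (Fin N)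

/-- Frobenius norm of a linear map between Euclidean spaces: the square root of the
sum of the squared norms of the columns. -/
def frobNorm {N M : ℕ} (T : Euc N →L[ℝ] Euc M) : ℝ :=
  Real.sqrt (∑ j : Fin N, ‖T (EuclideanSpace.single j 1)‖ ^ 2)

/-- The averaged inner function `G = (1/m) ∑ⱼ Gⱼ`. -/
def Gbar {m N M : ℕ} (G : Fin m → Euc N → Euc M) (x : Euc N) : Euc M :=
  (m : ℝ)⁻¹ • ∑ j, G j x

/-- The averaged Jacobian `∂G = (1/m) ∑ⱼ ∂Gⱼ`. -/
def Jbar {m N M : ℕ} (J : Fin m → Euc N → (Euc N →L[ℝ] Euc M)) (x : Euc N) :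
    Euc N →L[ℝ] Euc M :=
  (m : ℝ)⁻¹ • ∑ j, J j x

/-- `Tᵀ v`: the transpose (adjoint) of `T` applied to `v`. -/
def transApp {N M : ℕ} (T : Euc N →L[ℝ] Euc M) (v : Euc M) : Euc N :=
  ContinuousLinearMap.adjoint T v

/-- Assumption 2 of the paper: bounded gradients, Lipschitz gradients, bounded
Jacobians (Frobenius norm), Lipschitz inner functions and Lipschitz Jacobians. -/
def Assumption2 {n m N M : ℕ} (G : Fin m → Euc N → Euc M)
    (J : Fin m → Euc N → (Euc N →L[ℝ] Euc M))
    (gradF : Fin n → Euc M → Euc M) (BF LF BG LG : ℝ) : Prop :=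
  (∀ i y, ‖gradF i y‖ ≤ BF) ∧
  (∀ i y y', ‖gradF i y - gradF i y'‖ ≤ LF * ‖y - y'‖) ∧
  (∀ j x, frobNorm (J j x) ≤ BG) ∧
  (∀ j x x', ‖G j x - G j x'‖ ≤ BG * ‖x - x'‖) ∧
  (∀ j x x', frobNorm (J j x - J j x') ≤ LG * ‖x - x'‖)

/-- Continuous differentiability of the data, with the prescribed Jacobians and
gradients. -/
def SmoothData {n m N M : ℕ} (Fi : Fin n → Euc M → ℝ) (G : Fin m → Euc N → Euc M)
    (J : Fin m → Euc N → (Euc N →L[ℝ] Euc M)) (gradF : Fin n → Euc M → Euc M) : Prop :=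
  (∀ j x, HasFDerivAt (G j) (J j x) x) ∧ (∀ j, Continuous (J j)) ∧
  (∀ i y, HasGradientAt (Fi i) (gradF i y) y) ∧ (∀ i, Continuous (gradF i))

/-- Uniform average over all tuples `σ ∈ {1,…,m}^A`. -/
def Esig {m A : ℕ} (f : (Fin A → Fin m) → ℝ) : ℝ :=
  (∑ σ : Fin A → Fin m, f σ) / (m ^ A : ℝ)

/-- The SVRG estimator `Ĝ(σ,x,x̃)` of the inner function. -/
def GhatSVRG {m N M : ℕ} (G : Fin m → Euc N → Euc M) {A : ℕ}
    (σ : Fin A → Fin m) (x xt : Euc N) : Euc M :=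
  (A : ℝ)⁻¹ • ∑ l, (G (σ l) x - G (σ l) xt) + Gbar G xt

/-- The SVRG estimator `∂Ĝ(σ,x,x̃)` of the Jacobian. -/
def JhatSVRG {m N M : ℕ} (J : Fin m → Euc N → (Euc N →L[ℝ] Euc M)) {A : ℕ}
    (σ : Fin A → Fin m) (x xt : Euc N) : Euc N →L[ℝ] Euc M :=
  (A : ℝ)⁻¹ • ∑ l, (J (σ l) x - J (σ l) xt) + Jbar J xt

/-!
Write `Ĵ, Ĝ` for the SVRG estimators. Splitting
`Ĵᵀ∇Fᵢ(Ĝ) - ∂G(y)ᵀ∇Fᵢ(G(y)) = (Ĵ - ∂G(y))ᵀ∇Fᵢ(Ĝ) + ∂G(y)ᵀ(∇Fᵢ(Ĝ) - ∇Fᵢ(G(y)))`, bounding the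
operator norm of a transpose by the Frobenius norm and passing through `x` with
`‖a + b‖² ≤ 2‖a‖² + 2‖b‖²` reduces everything to `‖Ĵ - ∂G(x)‖_F²`, `‖Ĝ - G(x)‖²` and
`‖x - y‖²`. Now `Ĝ - G(x)` is the mean of `A` independent uniform draws from
`gⱼ = Gⱼ(x) - Gⱼ(x̃)` minus the population mean of `g`, so its second moment is `1/A` times
the variance of `g`, at most `(B_G‖x - x̃‖)²/A`; likewise for `Ĵ - ∂G(x)`, viewed as a vector
of columns, with `L_G` in place of `B_G`.
-/

open scoped BigOperators

theorem norm_sub_sq_le_two_mul {F : Type*} [SeminormedAddCommGroup F] (a b c : F) :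
    ‖a - c‖ ^ 2 ≤ 2 * ‖a - b‖ ^ 2 + 2 * ‖b - c‖ ^ 2 :=
  calc ‖a - c‖ ^ 2 ≤ (‖a - b‖ + ‖b - c‖) ^ 2 := by
        gcongr
        exact norm_sub_le_norm_sub_add_norm_sub a b c
    _ ≤ 2 * (‖a - b‖ ^ 2 + ‖b - c‖ ^ 2) := add_sq_le
    _ = 2 * ‖a - b‖ ^ 2 + 2 * ‖b - c‖ ^ 2 := mul_add _ _ _

abbrev ColumnSpace (N M : ℕ) := PiLp 2 (fun _ : Fin N => Euc M)

def columns (N M : ℕ) : (Euc N →L[ℝ] Euc M) →ₗ[ℝ] ColumnSpace N M where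
  toFun T := WithLp.toLp 2 fun j => T (EuclideanSpace.single j 1)
  map_add' T S := by ext j; simp
  map_smul' c T := by ext j; simp

section Frobenius

variable {N M : ℕ}

theorem frobNorm_eq_norm_columns (T : Euc N →L[ℝ] Euc M) : frobNorm T = ‖columns N M T‖ := by
  rw [frobNorm, PiLp.norm_eq_of_L2]
  rfl

theorem frobNorm_nonneg (T : Euc N →L[ℝ] Euc M) : 0 ≤ frobNorm T :=
  Real.sqrt_nonneg _

theorem norm_apply_le_frobNorm (T : Euc N →L[ℝ] Euc M) (u : Euc N) :
    ‖T u‖ ≤ frobNorm T * ‖u‖ := by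
  have hu : ∑ j, u j • EuclideanSpace.single j (1 : ℝ) = u := by
    simpa using (EuclideanSpace.basisFun (Fin N) ℝ).sum_repr u
  calc ‖T u‖ = ‖∑ j, u j • T (EuclideanSpace.single j 1)‖ := by
        conv_lhs => rw [← hu]
        simp only [map_sum, map_smul]
    _ ≤ ∑ j, ‖u j‖ * ‖T (EuclideanSpace.single j 1)‖ :=
        norm_sum_le_of_le _ fun j _ => (norm_smul _ _).le
    _ ≤ √(∑ j, ‖u j‖ ^ 2) * frobNorm T := Real.sum_mul_le_sqrt_mul_sqrt _ _ _
    _ = frobNorm T * ‖u‖ := by rw [EuclideanSpace.norm_eq, mul_comm]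

theorem opNorm_le_frobNorm (T : Euc N →L[ℝ] Euc M) : ‖T‖ ≤ frobNorm T :=
  T.opNorm_le_bound (frobNorm_nonneg T) (norm_apply_le_frobNorm T)

theorem norm_transApp_le (T : Euc N →L[ℝ] Euc M) (v : Euc M) :
    ‖transApp T v‖ ≤ frobNorm T * ‖v‖ :=
  calc ‖transApp T v‖ ≤ ‖ContinuousLinearMap.adjoint T‖ * ‖v‖ :=
        (ContinuousLinearMap.adjoint T).le_opNorm v
    _ ≤ frobNorm T * ‖v‖ := by
      rw [LinearIsometryEquiv.norm_map]
      gcongr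
      exact opNorm_le_frobNorm T

theorem frobNorm_sub_sq_le_two_mul (S T U : Euc N →L[ℝ] Euc M) :
    frobNorm (S - U) ^ 2 ≤ 2 * frobNorm (S - T) ^ 2 + 2 * frobNorm (T - U) ^ 2 := by
  simpa only [frobNorm_eq_norm_columns, map_sub] using
    norm_sub_sq_le_two_mul (columns N M S) (columns N M T) (columns N M U)

theorem norm_transApp_sub_transApp_sq_le (T T' : Euc N →L[ℝ] Euc M) (u u' : Euc M) {B B' : ℝ}
    (hu : ‖u‖ ≤ B) (hT' : frobNorm T' ≤ B') :
    ‖transApp T u - transApp T' u'‖ ^ 2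
      ≤ 2 * B ^ 2 * frobNorm (T - T') ^ 2 + 2 * B' ^ 2 * ‖u - u'‖ ^ 2 := by
  have hleft : ‖transApp (T - T') u‖ ≤ frobNorm (T - T') * B :=
    (norm_transApp_le _ _).trans (mul_le_mul_of_nonneg_left hu (frobNorm_nonneg _))
  have hright : ‖transApp T' (u - u')‖ ≤ B' * ‖u - u'‖ :=
    (norm_transApp_le _ _).trans (mul_le_mul_of_nonneg_right hT' (norm_nonneg _))
  calc ‖transApp T u - transApp T' u'‖ ^ 2
      ≤ 2 * ‖transApp (T - T') u‖ ^ 2 + 2 * ‖transApp T' (u - u')‖ ^ 2 := by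
        simpa only [transApp, map_sub, sub_apply] using
          norm_sub_sq_le_two_mul _ (transApp T' u) _
    _ ≤ 2 * (frobNorm (T - T') * B) ^ 2 + 2 * (B' * ‖u - u'‖) ^ 2 := by gcongr
    _ = 2 * B ^ 2 * frobNorm (T - T') ^ 2 + 2 * B' ^ 2 * ‖u - u'‖ ^ 2 := by ring

end Frobenius

section Averages

variable {ι E : Type*} [Fintype ι] [Nonempty ι] [NormedAddCommGroup E] [InnerProductSpace ℝ E]

theorem norm_inv_card_smul_sum_le (v : ι → E) {C : ℝ} (h : ∀ j, ‖v j‖ ≤ C) :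
    ‖(Fintype.card ι : ℝ)⁻¹ • ∑ j, v j‖ ≤ C := by
  rw [norm_smul, norm_inv, Real.norm_natCast, inv_mul_le_iff₀ (by positivity)]
  calc ‖∑ j, v j‖ ≤ ∑ _j : ι, C := norm_sum_le_of_le _ fun j _ => h j
    _ = Fintype.card ι * C := by rw [sum_const, card_univ, nsmul_eq_mul]

theorem expect_norm_sq_sum_comp_eq_mul (Z : ι → E) (hZ : ∑ j, Z j = 0) :
    ∀ A : ℕ, 𝔼 σ : Fin A → ι, ‖∑ l, Z (σ l)‖ ^ 2 = A * 𝔼 j, ‖Z j‖ ^ 2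
  | 0 => by simp
  | A + 1 => by
    have hcross (w : E) : 𝔼 j, ⟪Z j, w⟫ = 0 := by
      rw [Fintype.expect_eq_sum_div_card, ← sum_inner, hZ, inner_zero_left, zero_div]
    calc 𝔼 σ : Fin (A + 1) → ι, ‖∑ l, Z (σ l)‖ ^ 2
        = 𝔼 j, 𝔼 τ : Fin A → ι, ‖Z j + ∑ l, Z (τ l)‖ ^ 2 := by
          rw [← expect_product', univ_product_univ]
          exact Fintype.expect_equiv (Fin.consEquiv fun _ => ι).symm _ _
            fun σ => by simp [Fin.consEquiv, Fin.sum_univ_succ, Fin.tail]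
      _ = 𝔼 j, ‖Z j‖ ^ 2 + 2 * 𝔼 τ : Fin A → ι, 𝔼 j, ⟪Z j, ∑ l, Z (τ l)⟫
            + 𝔼 τ : Fin A → ι, ‖∑ l, Z (τ l)‖ ^ 2 := by
          simp only [norm_add_sq_real, expect_add_distrib, Fintype.expect_const, ← mul_expect]
          rw [expect_comm]
      _ = (A + 1 : ℕ) * 𝔼 j, ‖Z j‖ ^ 2 := by
          simp only [hcross, expect_const_zero, expect_norm_sq_sum_comp_eq_mul Z hZ A]
          push_cast; ring

theorem expect_norm_sq_sub_mean_le (g : ι → E) :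
    𝔼 j, ‖g j - (Fintype.card ι : ℝ)⁻¹ • ∑ k, g k‖ ^ 2 ≤ 𝔼 j, ‖g j‖ ^ 2 := by
  set c := (Fintype.card ι : ℝ)⁻¹ • ∑ k, g k
  have hc : 𝔼 j, ⟪g j, c⟫ = ‖c‖ ^ 2 := by
    rw [Fintype.expect_eq_sum_div_card, ← sum_inner, div_eq_inv_mul, ← real_inner_smul_left,
      real_inner_self_eq_norm_sq]
  calc 𝔼 j, ‖g j - c‖ ^ 2 = 𝔼 j, ‖g j‖ ^ 2 - ‖c‖ ^ 2 := by
        simp only [norm_sub_sq_real, expect_add_distrib, expect_sub_distrib, ← mul_expect, hc,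
          Fintype.expect_const]
        ring
    _ ≤ 𝔼 j, ‖g j‖ ^ 2 := sub_le_self _ (sq_nonneg _)

theorem expect_norm_sq_sampleMean_sub_mean_le {A : ℕ} (hA : 0 < A) (g : ι → E) {C : ℝ}
    (hg : ∀ j, ‖g j‖ ≤ C) :
    𝔼 σ : Fin A → ι, ‖(A : ℝ)⁻¹ • ∑ l, g (σ l) - (Fintype.card ι : ℝ)⁻¹ • ∑ j, g j‖ ^ 2
      ≤ C ^ 2 / A := by
  set c := (Fintype.card ι : ℝ)⁻¹ • ∑ j, g j
  have hA' : (A : ℝ) ≠ 0 := by positivity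
  have hcentered : ∑ j, (g j - c) = 0 := by
    rw [sum_sub_distrib, sum_const, card_univ, ← Nat.cast_smul_eq_nsmul ℝ, smul_smul,
      mul_inv_cancel₀ (by positivity), one_smul, sub_self]
  have hshift (σ : Fin A → ι) :
      (A : ℝ)⁻¹ • ∑ l, g (σ l) - c = (A : ℝ)⁻¹ • ∑ l, (g (σ l) - c) := by
    rw [sum_sub_distrib, sum_const, card_univ, Fintype.card_fin, ← Nat.cast_smul_eq_nsmul ℝ,
      smul_sub, smul_smul, inv_mul_cancel₀ hA', one_smul]
  calc 𝔼 σ : Fin A → ι, ‖(A : ℝ)⁻¹ • ∑ l, g (σ l) - c‖ ^ 2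
      = (A : ℝ)⁻¹ * 𝔼 j, ‖g j - c‖ ^ 2 := by
        simp only [hshift, norm_smul, mul_pow, ← mul_expect,
          expect_norm_sq_sum_comp_eq_mul _ hcentered A, norm_inv, Real.norm_natCast]
        field_simp
    _ ≤ (A : ℝ)⁻¹ * 𝔼 j, ‖g j‖ ^ 2 :=
        mul_le_mul_of_nonneg_left (expect_norm_sq_sub_mean_le g) (by positivity)
    _ ≤ (A : ℝ)⁻¹ * C ^ 2 := by
        gcongr
        exact expect_le univ_nonempty fun j _ => pow_le_pow_left₀ (norm_nonneg _) (hg j) 2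
    _ = C ^ 2 / A := inv_mul_eq_div _ _

end Averages

theorem Esig_eq_expect {m A : ℕ} (f : (Fin A → Fin m) → ℝ) : Esig f = 𝔼 σ, f σ := by
  rw [Esig, Fintype.expect_eq_sum_div_card, Fintype.card_fun, Fintype.card_fin, Fintype.card_fin,
    Nat.cast_pow]

theorem inv_mul_sum_eq_expect {n : ℕ} (f : Fin n → ℝ) : (n : ℝ)⁻¹ * ∑ i, f i = 𝔼 i, f i := by
  rw [Fintype.expect_eq_sum_div_card, Fintype.card_fin, inv_mul_eq_div]

section SVRG

variable {n m N M A : ℕ} {G : Fin m → Euc N → Euc M} {J : Fin m → Euc N → (Euc N →L[ℝ] Euc M)}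

theorem frobNorm_inv_smul_sum_le (hm : 0 < m) (T : Fin m → (Euc N →L[ℝ] Euc M)) {C : ℝ}
    (h : ∀ j, frobNorm (T j) ≤ C) : frobNorm ((m : ℝ)⁻¹ • ∑ j, T j) ≤ C := by
  have : Nonempty (Fin m) := ⟨⟨0, hm⟩⟩
  simpa only [frobNorm_eq_norm_columns, map_smul, map_sum, Fintype.card_fin] using
    norm_inv_card_smul_sum_le (fun j => columns N M (T j))
      (by simpa only [frobNorm_eq_norm_columns] using h)

theorem norm_Gbar_sub_Gbar_le (hm : 0 < m) {L : ℝ}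
    (hG : ∀ j x x', ‖G j x - G j x'‖ ≤ L * ‖x - x'‖) (x y : Euc N) :
    ‖Gbar G x - Gbar G y‖ ≤ L * ‖x - y‖ := by
  have : Nonempty (Fin m) := ⟨⟨0, hm⟩⟩
  simpa only [Gbar, smul_sub, sum_sub_distrib, Fintype.card_fin] using
    norm_inv_card_smul_sum_le (fun j => G j x - G j y) fun j => hG j x y

theorem frobNorm_Jbar_sub_Jbar_le (hm : 0 < m) {L : ℝ}
    (hJ : ∀ j x x', frobNorm (J j x - J j x') ≤ L * ‖x - x'‖) (x y : Euc N) :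
    frobNorm (Jbar J x - Jbar J y) ≤ L * ‖x - y‖ := by
  simpa only [Jbar, smul_sub, sum_sub_distrib] using
    frobNorm_inv_smul_sum_le hm (fun j => J j x - J j y) fun j => hJ j x y

theorem GhatSVRG_sub_Gbar (σ : Fin A → Fin m) (x xt : Euc N) :
    GhatSVRG G σ x xt - Gbar G x
      = (A : ℝ)⁻¹ • ∑ l, (G (σ l) x - G (σ l) xt) - (m : ℝ)⁻¹ • ∑ j, (G j x - G j xt) := by
  simp only [GhatSVRG, Gbar, smul_sub, sum_sub_distrib]
  abel

theorem JhatSVRG_sub_Jbar (σ : Fin A → Fin m) (x xt : Euc N) :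
    JhatSVRG J σ x xt - Jbar J x
      = (A : ℝ)⁻¹ • ∑ l, (J (σ l) x - J (σ l) xt) - (m : ℝ)⁻¹ • ∑ j, (J j x - J j xt) := by
  simp only [JhatSVRG, Jbar, smul_sub, sum_sub_distrib]
  abel

theorem expect_norm_sq_GhatSVRG_sub_Gbar_le (hm : 0 < m) (hA : 0 < A) {x xt : Euc N} {C : ℝ}
    (hG : ∀ j, ‖G j x - G j xt‖ ≤ C) :
    𝔼 σ : Fin A → Fin m, ‖GhatSVRG G σ x xt - Gbar G x‖ ^ 2 ≤ C ^ 2 / A := by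
  have : Nonempty (Fin m) := ⟨⟨0, hm⟩⟩
  simpa only [GhatSVRG_sub_Gbar, Fintype.card_fin] using
    expect_norm_sq_sampleMean_sub_mean_le hA _ hG

theorem expect_frobNorm_sq_JhatSVRG_sub_Jbar_le (hm : 0 < m) (hA : 0 < A) {x xt : Euc N} {C : ℝ}
    (hJ : ∀ j, frobNorm (J j x - J j xt) ≤ C) :
    𝔼 σ : Fin A → Fin m, frobNorm (JhatSVRG J σ x xt - Jbar J x) ^ 2 ≤ C ^ 2 / A := by
  have : Nonempty (Fin m) := ⟨⟨0, hm⟩⟩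
  simpa only [frobNorm_eq_norm_columns, JhatSVRG_sub_Jbar, map_sub, map_smul, map_sum,
    Fintype.card_fin] using
    expect_norm_sq_sampleMean_sub_mean_le hA (fun j => columns N M (J j x - J j xt))
      (by simpa only [frobNorm_eq_norm_columns] using hJ)

theorem norm_sq_svrgGradient_sub_le (hm : 0 < m) {BF LF BG LG : ℝ}
    {gradF : Fin n → Euc M → Euc M} (hA2 : Assumption2 G J gradF BF LF BG LG)
    (i : Fin n) (σ : Fin A → Fin m) (x xt y : Euc N) :
    ‖transApp (JhatSVRG J σ x xt) (gradF i (GhatSVRG G σ x xt)) -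
        transApp (Jbar J y) (gradF i (Gbar G y))‖ ^ 2
      ≤ 4 * BF ^ 2 * frobNorm (JhatSVRG J σ x xt - Jbar J x) ^ 2
        + 4 * BG ^ 2 * LF ^ 2 * ‖GhatSVRG G σ x xt - Gbar G x‖ ^ 2
        + 4 * (BF ^ 2 * LG ^ 2 + BG ^ 4 * LF ^ 2) * ‖x - y‖ ^ 2 := by
  obtain ⟨hgrad_bdd, hgrad_lip, hJ_bdd, hG_lip, hJ_lip⟩ := hA2
  set Jhat := JhatSVRG J σ x xt
  set Ghat := GhatSVRG G σ x xt
  have hJdev : frobNorm (Jhat - Jbar J y) ^ 2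
      ≤ 2 * frobNorm (Jhat - Jbar J x) ^ 2 + 2 * (LG * ‖x - y‖) ^ 2 := by
    refine (frobNorm_sub_sq_le_two_mul _ (Jbar J x) _).trans ?_
    gcongr
    exacts [frobNorm_nonneg _, frobNorm_Jbar_sub_Jbar_le hm hJ_lip x y]
  have hgrad_dev : ‖gradF i Ghat - gradF i (Gbar G y)‖ ^ 2
      ≤ LF ^ 2 * (2 * ‖Ghat - Gbar G x‖ ^ 2 + 2 * (BG * ‖x - y‖) ^ 2) := by
    calc ‖gradF i Ghat - gradF i (Gbar G y)‖ ^ 2 ≤ (LF * ‖Ghat - Gbar G y‖) ^ 2 := by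
          gcongr; exact hgrad_lip i _ _
      _ ≤ LF ^ 2 * (2 * ‖Ghat - Gbar G x‖ ^ 2 + 2 * (BG * ‖x - y‖) ^ 2) := by
          rw [mul_pow]
          gcongr
          refine (norm_sub_sq_le_two_mul _ (Gbar G x) _).trans ?_
          gcongr
          exact norm_Gbar_sub_Gbar_le hm hG_lip x y
  calc _ ≤ 2 * BF ^ 2 * frobNorm (Jhat - Jbar J y) ^ 2
        + 2 * BG ^ 2 * ‖gradF i Ghat - gradF i (Gbar G y)‖ ^ 2 :=
        norm_transApp_sub_transApp_sq_le _ _ _ _ (hgrad_bdd i _)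
          (frobNorm_inv_smul_sum_le hm _ fun j => hJ_bdd j y)
    _ ≤ 2 * BF ^ 2 * (2 * frobNorm (Jhat - Jbar J x) ^ 2 + 2 * (LG * ‖x - y‖) ^ 2)
        + 2 * BG ^ 2 * (LF ^ 2 * (2 * ‖Ghat - Gbar G x‖ ^ 2 + 2 * (BG * ‖x - y‖) ^ 2)) := by
        gcongr
    _ = _ := by ring

end SVRG

theorem svrg_gradient_deviation_reference_bound_general
    {n m N M A : ℕ} (hn : 0 < n) (hm : 0 < m) (hA : 0 < A)
    (BF LF BG LG : ℝ)
    (G : Fin m → Euc N → Euc M)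
    (J : Fin m → Euc N → (Euc N →L[ℝ] Euc M)) (gradF : Fin n → Euc M → Euc M)
    (hA2 : Assumption2 G J gradF BF LF BG LG)
    (x xt y : Euc N) :
    (n : ℝ)⁻¹ * ∑ i, Esig (fun σ : Fin A → Fin m =>
        ‖transApp (JhatSVRG J σ x xt) (gradF i (GhatSVRG G σ x xt)) -
          transApp (Jbar J y) (gradF i (Gbar G y))‖ ^ 2)
      ≤ 4 * (BF ^ 2 * LG ^ 2 + BG ^ 4 * LF ^ 2) *
          ((1 / (A : ℝ)) * ‖x - xt‖ ^ 2 + ‖x - y‖ ^ 2) := by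
  have : Nonempty (Fin n) := ⟨⟨0, hn⟩⟩
  have : Nonempty (Fin m) := ⟨⟨0, hm⟩⟩
  have hvarJ := expect_frobNorm_sq_JhatSVRG_sub_Jbar_le (J := J) hm hA
    fun j => hA2.2.2.2.2 j x xt
  have hvarG := expect_norm_sq_GhatSVRG_sub_Gbar_le (G := G) hm hA
    fun j => hA2.2.2.2.1 j x xt
  rw [inv_mul_sum_eq_expect]
  refine expect_le univ_nonempty fun i _ => ?_
  rw [Esig_eq_expect]
  calc _ ≤ 𝔼 σ : Fin A → Fin m, (4 * BF ^ 2 * frobNorm (JhatSVRG J σ x xt - Jbar J x) ^ 2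
          + 4 * BG ^ 2 * LF ^ 2 * ‖GhatSVRG G σ x xt - Gbar G x‖ ^ 2
          + 4 * (BF ^ 2 * LG ^ 2 + BG ^ 4 * LF ^ 2) * ‖x - y‖ ^ 2) :=
        expect_le_expect fun σ _ => norm_sq_svrgGradient_sub_le hm hA2 i σ x xt y
    _ = 4 * BF ^ 2 * 𝔼 σ : Fin A → Fin m, frobNorm (JhatSVRG J σ x xt - Jbar J x) ^ 2
          + 4 * BG ^ 2 * LF ^ 2 * 𝔼 σ : Fin A → Fin m, ‖GhatSVRG G σ x xt - Gbar G x‖ ^ 2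
          + 4 * (BF ^ 2 * LG ^ 2 + BG ^ 4 * LF ^ 2) * ‖x - y‖ ^ 2 := by
        rw [expect_add_distrib, expect_add_distrib, ← mul_expect, ← mul_expect,
          Fintype.expect_const]
    _ ≤ 4 * BF ^ 2 * ((LG * ‖x - xt‖) ^ 2 / A)
          + 4 * BG ^ 2 * LF ^ 2 * ((BG * ‖x - xt‖) ^ 2 / A)
          + 4 * (BF ^ 2 * LG ^ 2 + BG ^ 4 * LF ^ 2) * ‖x - y‖ ^ 2 := by
        gcongr
    _ = _ := by ring

/-- Deviation of the SVRG estimated gradient from the full gradient at an arbitrary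
reference point (corrected constants). -/
theorem svrg_gradient_deviation_reference_bound
    {n m N M A : ℕ} (hn : 0 < n) (hm : 0 < m) (hA : 0 < A)
    (BF LF BG LG : ℝ) (hBF : 0 < BF) (hLF : 0 < LF) (hBG : 0 < BG) (hLG : 0 < LG)
    (Fi : Fin n → Euc M → ℝ) (G : Fin m → Euc N → Euc M)
    (J : Fin m → Euc N → (Euc N →L[ℝ] Euc M)) (gradF : Fin n → Euc M → Euc M)
    (hsm : SmoothData Fi G J gradF)
    (hA2 : Assumption2 G J gradF BF LF BG LG)
    (x xt y : Euc N) :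
    (n : ℝ)⁻¹ * ∑ i, Esig (fun σ : Fin A → Fin m =>
        ‖transApp (JhatSVRG J σ x xt) (gradF i (GhatSVRG G σ x xt)) -
          transApp (Jbar J y) (gradF i (Gbar G y))‖ ^ 2)
      ≤ 4 * (BF ^ 2 * LG ^ 2 + BG ^ 4 * LF ^ 2) *
          ((1 / (A : ℝ)) * ‖x - xt‖ ^ 2 + ‖x - y‖ ^ 2) :=
  svrg_gradient_deviation_reference_bound_general hn hm hA BF LF BG LG G J gradF hA2 x xt y
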